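/- Let a₁, a₂, a₃ be pairwise relatively prime integers with 1 < a₁ < a₂ < a₃, and let f be the Frobenius number of (a₁, a₂, a₃), i.e. a nonnegative integer with r(f) = 0 such that r(b) ≥ 1 for every integer b > f. Then the equation a₁x₁ + a₂x₂ + a₃x₃ = f + a₁ has exactly one solution in nonnegative integers, i.e. r(f + a₁) = 1. -/
import Mathlib


/-- `r(b)`: the number of representations of `b` as `a₁x₁ + a₂x₂ + a₃x₃` with
`x₁, x₂, x₃` nonnegative integers. -/
noncomputable def numReps3 (a₁ a₂ a₃ b : ℕ) : ℕ :=
  Set.ncard {x : ℕ × ℕ × ℕ | a₁ * x.1 + a₂ * x.2.1 + a₃ * x.2.2 = b}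

lemma reps_finite (a₁ a₂ a₃ b : ℕ) (h₁ : 0 < a₁) (h₂ : 0 < a₂) (h₃ : 0 < a₃) :
    {x : ℕ × ℕ × ℕ | a₁ * x.1 + a₂ * x.2.1 + a₃ * x.2.2 = b}.Finite := by
  apply Set.Finite.subset (Set.finite_Iic (b, b, b))
  rintro ⟨x, y, z⟩ hx
  simp only [Set.mem_setOf_eq] at hx
  have hx1 : x ≤ b := by nlinarith
  have hy1 : y ≤ b := by nlinarith
  have hz1 : z ≤ b := by nlinarith
  exact ⟨hx1, hy1, hz1⟩

lemma reps_empty (a₁ a₂ a₃ b : ℕ) (h₁ : 0 < a₁) (h₂ : 0 < a₂) (h₃ : 0 < a₃)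
    (h : numReps3 a₁ a₂ a₃ b = 0) :
    ∀ x y z : ℕ, a₁ * x + a₂ * y + a₃ * z ≠ b := by
  intro x y z hxyz
  have hfin := reps_finite a₁ a₂ a₃ b h₁ h₂ h₃
  have : ((x, y, z) : ℕ × ℕ × ℕ) ∈ {x : ℕ × ℕ × ℕ | a₁ * x.1 + a₂ * x.2.1 + a₃ * x.2.2 = b} := hxyz
  have hne : {x : ℕ × ℕ × ℕ | a₁ * x.1 + a₂ * x.2.1 + a₃ * x.2.2 = b}.Nonempty := ⟨_, this⟩
  have := (Set.ncard_eq_zero hfin).mp h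
  rw [this] at hne
  exact Set.not_nonempty_empty hne

/-- if `f` is the Frobenius number of pairwise relatively prime
`1 < a₁ < a₂ < a₃`, then `f + a₁` has exactly one representation. -/
theorem stmt_15 (a₁ a₂ a₃ : ℕ) (h₁ : 1 < a₁) (h₁₂ : a₁ < a₂) (h₂₃ : a₂ < a₃)
    (h12 : Nat.Coprime a₁ a₂) (h13 : Nat.Coprime a₁ a₃) (h23 : Nat.Coprime a₂ a₃)
    (f : ℕ) (hf0 : numReps3 a₁ a₂ a₃ f = 0)
    (hf : ∀ b : ℕ, f < b → 1 ≤ numReps3 a₁ a₂ a₃ b) :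
    numReps3 a₁ a₂ a₃ (f + a₁) = 1 := by
  have ha₁ : 0 < a₁ := by omega
  have ha₂ : 0 < a₂ := by omega
  have ha₃ : 0 < a₃ := by omega
  have hempty := reps_empty a₁ a₂ a₃ f ha₁ ha₂ ha₃ hf0
  -- f ≤ a₂ * a₃ - a₂ - a₃ by the chicken McNugget theorem
  have hFrob := frobeniusNumber_pair h23 (by omega : 1 < a₂) (by omega : 1 < a₃)
  have hfle : f ≤ a₂ * a₃ - a₂ - a₃ := by
    apply hFrob.2
    simp only [Set.mem_setOf_eq, AddSubmonoid.mem_closure_pair]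
    rintro ⟨u, v, huv⟩
    exact hempty 0 u v (by simpa [mul_comm] using huv)
  have hprod : a₂ + a₃ ≤ a₂ * a₃ := Nat.add_le_mul (by omega) (by omega)
  have hlt : f + a₁ < a₂ * a₃ := by omega
  -- every representation of f + a₁ has x₁ = 0
  have hx1zero : ∀ x : ℕ × ℕ × ℕ,
      a₁ * x.1 + a₂ * x.2.1 + a₃ * x.2.2 = f + a₁ → x.1 = 0 := by
    rintro ⟨x, y, z⟩ hx
    by_contra hxne
    have hx1 : 1 ≤ x := Nat.one_le_iff_ne_zero.mpr hxne
    exact hempty (x - 1) y z (by simp only at hx ⊢; nlinarith [Nat.sub_add_cancel hx1])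
  -- existence
  have h1 := hf (f + a₁) (by omega)
  unfold numReps3 at h1 ⊢
  have hfin := reps_finite a₁ a₂ a₃ (f + a₁) ha₁ ha₂ ha₃
  obtain ⟨w, hw⟩ := Set.nonempty_of_ncard_ne_zero (Nat.one_le_iff_ne_zero.mp h1)
  rw [Set.ncard_eq_one]
  refine ⟨w, Set.eq_singleton_iff_unique_mem.mpr ⟨hw, ?_⟩⟩
  rintro ⟨x, y, z⟩ hx
  obtain ⟨w₁, w₂, w₃⟩ := w
  simp only [Set.mem_setOf_eq] at hx hw
  have hxz : x = 0 := hx1zero (x, y, z) hx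
  have hwz : w₁ = 0 := hx1zero (w₁, w₂, w₃) hw
  subst hxz hwz
  simp only [mul_zero, zero_add] at hx hw
  -- now a₂ * y + a₃ * z = a₂ * w₂ + a₃ * w₃ = f + a₁ < a₂ * a₃
  have hy : y = w₂ := by
    by_contra hne
    rcases Nat.lt_or_ge y w₂ with h | h
    · -- a₂ * (w₂ - y) = a₃ * (z - w₃)
      have hmy : a₂ * y < a₂ * w₂ := Nat.mul_lt_mul_of_pos_left h ha₂
      have hz : w₃ ≤ z := by
        have : a₃ * w₃ < a₃ * z := by omega
        exact (Nat.lt_of_mul_lt_mul_left this).le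
      have hdvd : a₃ ∣ w₂ - y := by
        have heq : a₂ * (w₂ - y) = a₃ * (z - w₃) := by
          rw [Nat.mul_sub, Nat.mul_sub]; omega
        exact (Nat.Coprime.dvd_of_dvd_mul_left h23.symm ⟨_, heq⟩)
      have : a₃ ≤ w₂ - y := Nat.le_of_dvd (by omega) hdvd
      have : a₂ * a₃ ≤ a₂ * w₂ := by
        calc a₂ * a₃ ≤ a₂ * (w₂ - y) := Nat.mul_le_mul_left _ this
        _ ≤ a₂ * w₂ := Nat.mul_le_mul_left _ (Nat.sub_le _ _)
      omega
    · have hlt' : w₂ < y := lt_of_le_of_ne h (Ne.symm hne)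
      have hmy : a₂ * w₂ < a₂ * y := Nat.mul_lt_mul_of_pos_left hlt' ha₂
      have hz : z ≤ w₃ := by
        have : a₃ * z < a₃ * w₃ := by omega
        exact (Nat.lt_of_mul_lt_mul_left this).le
      have hdvd : a₃ ∣ y - w₂ := by
        have heq : a₂ * (y - w₂) = a₃ * (w₃ - z) := by
          rw [Nat.mul_sub, Nat.mul_sub]; omega
        exact (Nat.Coprime.dvd_of_dvd_mul_left h23.symm ⟨_, heq⟩)
      have : a₃ ≤ y - w₂ := Nat.le_of_dvd (by omega) hdvd
      have : a₂ * a₃ ≤ a₂ * y := by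
        calc a₂ * a₃ ≤ a₂ * (y - w₂) := Nat.mul_le_mul_left _ this
        _ ≤ a₂ * y := Nat.mul_le_mul_left _ (Nat.sub_le _ _)
      omega
  subst hy
  have : z = w₃ := by
    have : a₃ * z = a₃ * w₃ := by omega
    exact Nat.eq_of_mul_eq_mul_left ha₃ this
  simp [this]
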